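/- arXiv:2202.05356 — 2 statements merged into one kernel-verified Lean document; each statement's English description precedes it below -/
import Mathlib

section
/- Define the long-term total effect τ_{LTE}(π₁, π₂) = (1/n)·Σ_{i=1}^n ( E_{μ(π₁)}[Y_i] − E_{μ(π₂)}[Y_i] ) and its mean-field analogue τ̃_{LTE}(π₁, π₂) = (1/n)·Σ_{i=1}^n ( P*_i(π₁) − P*_i(π₂) ), where P*(π) is the unique fixed point of the mean-field dynamical system with treatment vector π. Under the regularity assumptions, for any Δ ∈ ℝ and v ∈ ℝ^n with π + Δv ∈ (0,1)^n: | τ_{LTE}(π + Δv, π) − τ̃_{LTE}(π + Δv, π) | ≤ √(L_n)·√C/(1−C). -/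
open Finset Filter Topology

noncomputable section

namespace MRT

/-- The state space: binary outcomes for each of the `n` units. -/
abbrev State (n : ℕ) := Fin n → Bool

variable {n : ℕ}

/-- `zc Nbr y i` is `Z_i(y) = ∑_{j ∈ 𝒩_i} y_j`, the number of active neighbors of `i`. -/
def zc (Nbr : Fin n → Finset (Fin n)) (y : State n) (i : Fin n) : ℝ :=
  ∑ j ∈ Nbr i, (if y j then (1 : ℝ) else 0)

/-- Probability that coordinate `i` is `1` at the next step, starting from state `y`,
under Bernoulli(π i) treatments. -/
def succProb (Nbr : Fin n → Finset (Fin n)) (f : Fin n → Bool → Bool → ℝ → ℝ)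
    (π : Fin n → ℝ) (y : State n) (i : Fin n) : ℝ :=
  π i * f i (y i) true (zc Nbr y i) + (1 - π i) * f i (y i) false (zc Nbr y i)

/-- Transition kernel `P(π)` of the MDP with Bernoulli treatments. -/
def kernel (Nbr : Fin n → Finset (Fin n)) (f : Fin n → Bool → Bool → ℝ → ℝ)
    (π : Fin n → ℝ) (y y' : State n) : ℝ :=
  ∏ i, if y' i then succProb Nbr f π y i else 1 - succProb Nbr f π y i

/-- One-step pushforward `ν P(π)` of a distribution `ν` under the kernel. -/
def step (Nbr : Fin n → Finset (Fin n)) (f : Fin n → Bool → Bool → ℝ → ℝ)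
    (π : Fin n → ℝ) (ν : State n → ℝ) : State n → ℝ :=
  fun y' => ∑ y, ν y * kernel Nbr f π y y'

/-- `ν` is a probability distribution on `{0,1}^n`. -/
def IsDist (ν : State n → ℝ) : Prop := (∀ y, 0 ≤ ν y) ∧ ∑ y, ν y = 1

/-- `μ` is a stationary probability distribution for the kernel. -/
def IsStationary (Nbr : Fin n → Finset (Fin n)) (f : Fin n → Bool → Bool → ℝ → ℝ)
    (π : Fin n → ℝ) (μ : State n → ℝ) : Prop :=
  IsDist μ ∧ step Nbr f π μ = μ

/-- Expectation of `g` under the (finitely supported) distribution `ν`. -/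
def expect (ν : State n → ℝ) (g : State n → ℝ) : ℝ := ∑ y, ν y * g y

/-- `γ` is a coupling of `ν₁` and `ν₂`. -/
def IsCoupling (γ : State n × State n → ℝ) (ν₁ ν₂ : State n → ℝ) : Prop :=
  (∀ p, 0 ≤ γ p) ∧ (∀ x, ∑ y, γ (x, y) = ν₁ x) ∧ (∀ y, ∑ x, γ (x, y) = ν₂ y)

/-- `∑ i |x_i - y_i|` for binary vectors. -/
def hamming (x y : State n) : ℝ := ∑ i : Fin n, (if x i = y i then (0:ℝ) else 1)

/-- The `L1`-Wasserstein distance between two distributions on `{0,1}^n`. -/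
def WL1 (ν₁ ν₂ : State n → ℝ) : ℝ :=
  sInf {c | ∃ γ, IsCoupling γ ν₁ ν₂ ∧ c = ∑ p : State n × State n, γ p * hamming p.1 p.2}

/-- `∑_{j ∈ 𝒩_i} |x_j - y_j|` for binary vectors. -/
def nbrDiff (Nbr : Fin n → Finset (Fin n)) (i : Fin n) (x y : State n) : ℝ :=
  ∑ j ∈ Nbr i, (if x j = y j then (0:ℝ) else 1)

/-- The graph-dependent Wasserstein distance `W_{d_{E,k}}`. -/
def WdE (Nbr : Fin n → Finset (Fin n)) (k : ℕ) (ν₁ ν₂ : State n → ℝ) : ℝ :=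
  sInf {c | ∃ γ, IsCoupling γ ν₁ ν₂ ∧
    c = ⨆ i : Fin n,
      (∑ p : State n × State n, γ p * (nbrDiff Nbr i p.1 p.2) ^ k) ^ ((k : ℝ)⁻¹)}

/-- Multilinear extension of `f i` to probabilities `p, w ∈ [0,1]`:
`f_i(p,w,z) = a_i(z) + b_i(z) w + c_i(z) p + d_i(z) w p`. -/
def fext (f : Fin n → Bool → Bool → ℝ → ℝ) (i : Fin n) (p w z : ℝ) : ℝ :=
  f i false false z + (f i false true z - f i false false z) * w +
    (f i true false z - f i false false z) * p +
    (f i true true z - f i false true z - f i true false z + f i false false z) * w * p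

/-- `Q_i = ∑_{j ∈ 𝒩_i} P_j`. -/
def mfQ (Nbr : Fin n → Finset (Fin n)) (P : Fin n → ℝ) (i : Fin n) : ℝ := ∑ j ∈ Nbr i, P j

/-- One step of the mean-field dynamical system. -/
def mfStep (Nbr : Fin n → Finset (Fin n)) (f : Fin n → Bool → Bool → ℝ → ℝ)
    (π : Fin n → ℝ) (P : Fin n → ℝ) : Fin n → ℝ :=
  fun i => fext f i (P i) (π i) (mfQ Nbr P i)

/-- `P` is a fixed point of the mean-field dynamical system, lying in `[0,1]^n`. -/
def IsMFFixed (Nbr : Fin n → Finset (Fin n)) (f : Fin n → Bool → Bool → ℝ → ℝ)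
    (π : Fin n → ℝ) (P : Fin n → ℝ) : Prop :=
  (∀ i, P i ∈ Set.Icc (0:ℝ) 1) ∧ mfStep Nbr f π P = P

/-- Law of a vector of independent Bernoulli(P i) coordinates. -/
def prodLaw (P : Fin n → ℝ) (y : State n) : ℝ := ∏ i, if y i then P i else 1 - P i

/-- Probability of the treatment vector `w` under independent Bernoulli(π i). -/
def wProb (π : Fin n → ℝ) (w : State n) : ℝ := ∏ i, if w i then π i else 1 - π i

/-- Conditional probability of the next state `y'` given state `y` and treatments `w`. -/
def condProb (Nbr : Fin n → Finset (Fin n)) (f : Fin n → Bool → Bool → ℝ → ℝ)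
    (y w y' : State n) : ℝ :=
  ∏ i, if y' i then f i (y i) (w i) (zc Nbr y i) else 1 - f i (y i) (w i) (zc Nbr y i)

/-- Probability of the trajectory `(Y_1, …, Y_{T+1}; W_1, …, W_T)` (indexed from `0` in Lean)
of the MDP with Bernoulli treatments, with initial distribution `ν₀`. -/
def trajProb (Nbr : Fin n → Finset (Fin n)) (f : Fin n → Bool → Bool → ℝ → ℝ)
    (π : Fin n → ℝ) (T : ℕ) (ν₀ : State n → ℝ)
    (Y : Fin (T + 1) → State n) (W : Fin T → State n) : ℝ :=
  ν₀ (Y 0) * ∏ t : Fin T, wProb π (W t) * condProb Nbr f (Y t.castSucc) (W t) (Y t.succ)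

/-- The estimator `f̂_i(y,w)` computed from the trajectory (convention `0/0 = 0`,
which is Lean's division). -/
def fhat {T : ℕ} (Y : Fin (T + 1) → State n) (W : Fin T → State n)
    (i : Fin n) (y w : Bool) : ℝ :=
  (∑ t : Fin T, if Y t.castSucc i = y ∧ W t i = w then (if Y t.succ i then (1:ℝ) else 0) else 0) /
  (∑ t : Fin T, if Y t.castSucc i = y ∧ W t i = w then (1:ℝ) else 0)

/-- The undirected-graph structure: symmetric neighborhoods without self-loops. -/
def GoodGraph (Nbr : Fin n → Finset (Fin n)) : Prop :=
  (∀ i j, i ∈ Nbr j ↔ j ∈ Nbr i) ∧ ∀ i, i ∉ Nbr i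

/-- `f` takes values strictly between 0 and 1. -/
def PosF (f : Fin n → Bool → Bool → ℝ → ℝ) : Prop :=
  ∀ i y w z, 0 ≤ z → f i y w z ∈ Set.Ioo (0:ℝ) 1

/-- The regularity assumptions: `L`-Lipschitzness in the third argument, the bound `B` on
the effect of the first argument, maximal degree `D`, and the contraction condition
`B + L·D ≤ C < 1`. -/
def Regular (Nbr : Fin n → Finset (Fin n)) (f : Fin n → Bool → Bool → ℝ → ℝ)
    (L B : ℝ) (D : ℕ) (C : ℝ) : Prop :=
  0 ≤ L ∧
  (∀ i y w z₁ z₂, 0 ≤ z₁ → 0 ≤ z₂ → |f i y w z₁ - f i y w z₂| ≤ L * |z₁ - z₂|) ∧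
  (∀ i w z, 0 ≤ z → |f i true w z - f i false w z| ≤ B) ∧
  (∀ i, (Nbr i).card ≤ D) ∧
  B + L * D ≤ C ∧ C < 1

/-- Adjacency matrix of the interference graph. -/
def adjMat (Nbr : Fin n → Finset (Fin n)) : Matrix (Fin n) (Fin n) ℝ :=
  Matrix.of fun i j => if j ∈ Nbr i then (1:ℝ) else 0


/-- Indicator of `Y_i = 1` as a real-valued function of the state. -/
def Yi (i : Fin n) (s : State n) : ℝ := if s i then 1 else 0

/-- `a_i(z) = f_i(0,0,z)`. -/
def aF (f : Fin n → Bool → Bool → ℝ → ℝ) (i : Fin n) (z : ℝ) : ℝ := f i false false z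

/-- `b_i(z) = f_i(0,1,z) - f_i(0,0,z)`. -/
def bF (f : Fin n → Bool → Bool → ℝ → ℝ) (i : Fin n) (z : ℝ) : ℝ :=
  f i false true z - f i false false z

/-- `c_i(z) = f_i(1,0,z) - f_i(0,0,z)`. -/
def cF (f : Fin n → Bool → Bool → ℝ → ℝ) (i : Fin n) (z : ℝ) : ℝ :=
  f i true false z - f i false false z

/-- `d_i(z) = f_i(1,1,z) - f_i(0,1,z) - f_i(1,0,z) + f_i(0,0,z)`. -/
def dF (f : Fin n → Bool → Bool → ℝ → ℝ) (i : Fin n) (z : ℝ) : ℝ :=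
  f i true true z - f i false true z - f i true false z + f i false false z

/-- `â_i` computed from the trajectory. -/
def ahat {T : ℕ} (Y : Fin (T + 1) → State n) (W : Fin T → State n) (i : Fin n) : ℝ :=
  fhat Y W i false false

/-- `b̂_i` computed from the trajectory. -/
def bhat {T : ℕ} (Y : Fin (T + 1) → State n) (W : Fin T → State n) (i : Fin n) : ℝ :=
  fhat Y W i false true - fhat Y W i false false

/-- `ĉ_i` computed from the trajectory. -/
def chat {T : ℕ} (Y : Fin (T + 1) → State n) (W : Fin T → State n) (i : Fin n) : ℝ :=
  fhat Y W i true false - fhat Y W i false false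

/-- `d̂_i` computed from the trajectory. -/
def dhat {T : ℕ} (Y : Fin (T + 1) → State n) (W : Fin T → State n) (i : Fin n) : ℝ :=
  fhat Y W i true true + fhat Y W i false false - fhat Y W i false true - fhat Y W i true false

/-- The plug-in estimator `τ̂_LDE(γ₁, γ₂)` of the long-term direct effect. -/
def ldeHat {T : ℕ} (Y : Fin (T + 1) → State n) (W : Fin T → State n) (γ₁ γ₂ : ℝ) : ℝ :=
  (1 / (n : ℝ)) * ∑ i : Fin n,
    ((ahat Y W i + bhat Y W i * γ₁) / (1 - chat Y W i - dhat Y W i * γ₁) -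
      (ahat Y W i + bhat Y W i * γ₂) / (1 - chat Y W i - dhat Y W i * γ₂))

/-- `P̂_i = (1/T) ∑_{t=1}^T Y_{it}`. -/
def Phat {T : ℕ} (Y : Fin (T + 1) → State n) (i : Fin n) : ℝ :=
  (∑ t : Fin T, if Y t.castSucc i then (1 : ℝ) else 0) / T

/-- The regression estimator `f̂'_i(y,w)_{δ_T}` of the derivative of `f_i` in its third
argument, computed from the trajectory (`Dr` is the degree bound `D_n`, `δ` is `δ_T`). -/
def fhatD (Nbr : Fin n → Finset (Fin n)) {T : ℕ}
    (Y : Fin (T + 1) → State n) (W : Fin T → State n)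
    (i : Fin n) (y w : Bool) (Dr δ : ℝ) : ℝ :=
  let ind : Fin T → ℝ := fun t => if Y t.castSucc i = y ∧ W t i = w then 1 else 0
  let cnt : ℝ := ∑ t, ind t
  let Ybar : ℝ := (∑ t, ind t * (if Y t.succ i then (1 : ℝ) else 0)) / cnt
  let Zbar : ℝ := (∑ t, ind t * zc Nbr (Y t.castSucc) i) / cnt
  (∑ t, ind t * ((if Y t.succ i then (1 : ℝ) else 0) - Ybar) * (zc Nbr (Y t.castSucc) i - Zbar)) /
    max (Dr * T * δ) (∑ t, ind t * (zc Nbr (Y t.castSucc) i - Zbar) ^ 2)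

/-- The plug-in estimator `τ̂_LTE(π + Δv, π)/Δ = (1/n)·𝟙ᵀ(M_η − D̂A − Ŵ_κ)⁻¹ û`
of the (rescaled) long-term total effect. -/
def lteHatOverDelta (Nbr : Fin n → Finset (Fin n)) (π v : Fin n → ℝ) {T : ℕ}
    (Y : Fin (T + 1) → State n) (W : Fin T → State n) (Dn : ℕ) (δ η κ : ℝ) : ℝ :=
  let Dh : Fin n → ℝ := fun i =>
    (1 - π i) * (1 - Phat Y i) * fhatD Nbr Y W i false false Dn δ +
      π i * (1 - Phat Y i) * fhatD Nbr Y W i false true Dn δ +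
      Phat Y i * (1 - π i) * fhatD Nbr Y W i true false Dn δ +
      Phat Y i * π i * fhatD Nbr Y W i true true Dn δ
  let ω : Fin n → ℝ := fun i => min (1 - κ) (chat Y W i + dhat Y W i * π i)
  let u : Fin n → ℝ := fun i => (bhat Y W i + dhat Y W i * Phat Y i) * v i
  let Mη : Matrix (Fin n) (Fin n) ℝ :=
    Matrix.diagonal fun i => max 1 (Dh i * Dn / (1 - η) + ω i)
  (1 / (n : ℝ)) *
    ∑ i : Fin n, ((Mη - Matrix.diagonal Dh * adjMat Nbr - Matrix.diagonal ω)⁻¹.mulVec u) i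

end MRT


end


/-! Fix a treatment vector `π`, a stationary law `μ` and the mean-field fixed point `P`, and
linearise the one-step success probability of unit `j` around `q_j = Q_j(P)`:
`s_j(y) - P_j = γ_j (y_j - P_j) + β_j(y)` (`ownEffect`, `nbrFluct`), where `|γ_j| ≤ B` and
`|β_j(y)| ≤ L |∑_{k ∈ 𝒩_j} (y_k - P_k)|`.
Given `y`, the next state has independent coordinates, so stationarity turns the conditional
variance–bias split into a recursion for `M`, the largest `L²(μ)`-norm of
`∑_{j ∈ 𝒩_i} c_j (Y_j - P_j)` over `|c_j| ≤ 1`: `M² ≤ D/4 + (C M)²`, i.e. `M² ≤ D / (4(1 - C²))`.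
Averaging the linearisation against `μ` gives `(1 - B) |E_μ Y_i - P_i| ≤ L M ≤ √L √C / (2(1 - C))`,
and the theorem follows by applying this to `π` and to `π + Δv`. -/

noncomputable section

namespace MRT

section WeightedL2

variable {α : Type*} [Fintype α] {ν : α → ℝ}

def l2Norm (ν g : α → ℝ) : ℝ := √(∑ y, ν y * g y ^ 2)

theorem sq_l2Norm (hν : ∀ y, 0 ≤ ν y) (g : α → ℝ) : l2Norm ν g ^ 2 = ∑ y, ν y * g y ^ 2 :=
  Real.sq_sqrt (sum_nonneg fun y _ => mul_nonneg (hν y) (sq_nonneg _))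

theorem l2Norm_eq_norm (hν : ∀ y, 0 ≤ ν y) (g : α → ℝ) :
    l2Norm ν g = ‖(WithLp.toLp 2 fun y => √(ν y) * g y : EuclideanSpace ℝ α)‖ := by
  simp [l2Norm, EuclideanSpace.norm_eq, mul_pow, Real.sq_sqrt (hν _)]

theorem l2Norm_add_le (hν : ∀ y, 0 ≤ ν y) (g h : α → ℝ) :
    l2Norm ν (g + h) ≤ l2Norm ν g + l2Norm ν h := by
  simp only [l2Norm_eq_norm hν]
  refine le_of_eq_of_le ?_ (norm_add_le _ _)
  congr 1
  ext y
  simp [mul_add]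

theorem l2Norm_sum_le (hν : ∀ y, 0 ≤ ν y) {ι : Type*} (s : Finset ι) (g : ι → α → ℝ) :
    l2Norm ν (∑ j ∈ s, g j) ≤ ∑ j ∈ s, l2Norm ν (g j) := by
  simp only [l2Norm_eq_norm hν]
  refine le_of_eq_of_le ?_ (norm_sum_le _ _)
  congr 1
  ext y
  simp [mul_sum]

theorem l2Norm_const_mul (hν : ∀ y, 0 ≤ ν y) (a : ℝ) (g : α → ℝ) :
    l2Norm ν (fun y => a * g y) = |a| * l2Norm ν g := by
  simp only [l2Norm_eq_norm hν, ← Real.norm_eq_abs, ← norm_smul]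
  congr 1
  ext y
  simp only [PiLp.smul_apply, smul_eq_mul]
  ring

theorem l2Norm_mono (hν : ∀ y, 0 ≤ ν y) {g h : α → ℝ} (hgh : ∀ y, |g y| ≤ |h y|) :
    l2Norm ν g ≤ l2Norm ν h :=
  Real.sqrt_le_sqrt <| sum_le_sum fun y _ =>
    mul_le_mul_of_nonneg_left (sq_le_sq.mpr (hgh y)) (hν y)

theorem l2Norm_le_of_abs_le (hν : ∀ y, 0 ≤ ν y) (hν1 : ∑ y, ν y = 1) {g : α → ℝ} {K : ℝ}
    (hg : ∀ y, |g y| ≤ K) : l2Norm ν g ≤ K := by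
  obtain ⟨y₀, -⟩ := nonempty_of_sum_ne_zero (hν1 ▸ one_ne_zero)
  have hK : 0 ≤ K := (abs_nonneg _).trans (hg y₀)
  calc l2Norm ν g ≤ l2Norm ν fun _ => K := l2Norm_mono hν fun y => (hg y).trans (le_abs_self K)
    _ = K := by simp [l2Norm, ← sum_mul, hν1, Real.sqrt_sq hK]

theorem abs_sum_mul_le_l2Norm (hν : ∀ y, 0 ≤ ν y) (hν1 : ∑ y, ν y = 1) (g : α → ℝ) :
    |∑ y, ν y * g y| ≤ l2Norm ν g := by
  have hcs : ∀ g : α → ℝ, ∑ y, ν y * g y ≤ l2Norm ν g := fun g => by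
    have := Real.sum_mul_le_sqrt_mul_sqrt univ (fun y => √(ν y)) (fun y => √(ν y) * g y)
    simpa [← mul_assoc, Real.mul_self_sqrt (hν _), Real.sq_sqrt (hν _), mul_pow, hν1,
      l2Norm] using this
  refine abs_le.mpr ⟨?_, hcs g⟩
  have := hcs (-g)
  simp only [Pi.neg_apply, mul_neg, sum_neg_distrib, l2Norm, neg_sq] at this ⊢
  linarith

end WeightedL2

section ProductLaw

variable {n : ℕ}

theorem expect_sum {ι : Type*} (ν : State n → ℝ) (s : Finset ι) (g : ι → State n → ℝ) :
    expect ν (fun y => ∑ j ∈ s, g j y) = ∑ j ∈ s, expect ν (g j) := by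
  simp only [expect, mul_sum]
  exact sum_comm

theorem expect_add (ν g h : State n → ℝ) :
    expect ν (fun y => g y + h y) = expect ν g + expect ν h := by
  simp only [expect, mul_add, sum_add_distrib]

theorem expect_sub_const {ν : State n → ℝ} (hν : IsDist ν) (g : State n → ℝ) (a : ℝ) :
    expect ν (fun y => g y - a) = expect ν g - a := by
  simp only [expect, mul_sub, sum_sub_distrib, ← sum_mul, hν.2, one_mul]

theorem expect_le_of_le {ν : State n → ℝ} (hν : IsDist ν) {g : State n → ℝ} {K : ℝ}
    (hg : ∀ y, g y ≤ K) : expect ν g ≤ K :=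
  calc expect ν g ≤ ∑ y, ν y * K := sum_le_sum fun y _ => mul_le_mul_of_nonneg_left (hg y) (hν.1 y)
    _ = K := by rw [← sum_mul, hν.2, one_mul]

theorem expect_const_mul (ν g : State n → ℝ) (a : ℝ) :
    expect ν (fun y => a * g y) = a * expect ν g := by
  simp only [expect, mul_sum]
  exact sum_congr rfl fun y _ => by ring

theorem expect_prodLaw_prod (s : Fin n → ℝ) (φ : Fin n → Bool → ℝ) (T : Finset (Fin n)) :
    expect (prodLaw s) (fun y => ∏ i ∈ T, φ i (y i)) =
      ∏ i ∈ T, (s i * φ i true + (1 - s i) * φ i false) := by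
  classical
  let g : Fin n → Bool → ℝ := fun i b => (if b then s i else 1 - s i) * if i ∈ T then φ i b else 1
  have hg : ∀ y : State n, prodLaw s y * ∏ i ∈ T, φ i (y i) = ∏ i, g i (y i) := fun y => by
    rw [prodLaw, prod_mul_distrib, Fintype.prod_ite_mem]
  simp only [expect, hg]
  rw [← Fintype.prod_sum, ← Fintype.prod_ite_mem T]
  refine Fintype.prod_congr _ _ fun i => ?_
  by_cases hi : i ∈ T <;> simp [g, hi]

theorem expect_prodLaw_Yi (s : Fin n → ℝ) (j : Fin n) : expect (prodLaw s) (Yi j) = s j := by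
  have h := expect_prodLaw_prod s (fun _ b => if b then 1 else 0) {j}
  simp only [prod_singleton, ↓reduceIte, Bool.false_eq_true] at h
  exact h.trans (by ring)

theorem expect_prodLaw_centered_mul (s P : Fin n → ℝ) (j k : Fin n) :
    expect (prodLaw s) (fun y => (Yi j y - P j) * (Yi k y - P k)) =
      (s j - P j) * (s k - P k) + if j = k then s j * (1 - s j) else 0 := by
  obtain rfl | hjk := eq_or_ne j k
  · have h := expect_prodLaw_prod s (fun i b => ((if b then 1 else 0) - P i) ^ 2) {j}
    simp only [prod_singleton, ↓reduceIte, Bool.false_eq_true] at h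
    rw [if_pos rfl]
    simp only [← sq]
    exact h.trans (by ring)
  · have h := expect_prodLaw_prod s (fun i b => (if b then 1 else 0) - P i) {j, k}
    simp only [prod_pair hjk, ↓reduceIte, Bool.false_eq_true] at h
    rw [if_neg hjk, add_zero]
    exact h.trans (by ring)

theorem expect_prodLaw_sq_sum (s P c : Fin n → ℝ) (S : Finset (Fin n)) :
    expect (prodLaw s) (fun y => (∑ j ∈ S, c j * (Yi j y - P j)) ^ 2) =
      ∑ j ∈ S, c j ^ 2 * (s j * (1 - s j)) + (∑ j ∈ S, c j * (s j - P j)) ^ 2 := by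
  have hjk : ∀ j k, expect (prodLaw s) (fun y => c j * (Yi j y - P j) * (c k * (Yi k y - P k))) =
      c j * (s j - P j) * (c k * (s k - P k)) +
        if j = k then c j ^ 2 * (s j * (1 - s j)) else 0 := fun j k => by
    calc _ = c j * c k * expect (prodLaw s) (fun y => (Yi j y - P j) * (Yi k y - P k)) := by
          rw [← expect_const_mul]
          exact congrArg _ (funext fun y => by ring)
      _ = _ := by
          rw [expect_prodLaw_centered_mul]
          split_ifs with h
          · subst h; ring
          · ring
  simp only [sq, sum_mul_sum, expect_sum, hjk, sum_add_distrib, sum_ite_eq, sum_ite_mem, inter_self]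
  ring

end ProductLaw

theorem abs_convex_comb_le {t a b K : ℝ} (ht : t ∈ Set.Icc 0 1) (ha : |a| ≤ K) (hb : |b| ≤ K) :
    |t * a + (1 - t) * b| ≤ K := by
  obtain ⟨ht0, ht1⟩ := ht
  obtain ⟨ha1, ha2⟩ := abs_le.mp ha
  obtain ⟨hb1, hb2⟩ := abs_le.mp hb
  exact abs_le.mpr ⟨by nlinarith, by nlinarith⟩

theorem mul_sqrt_div_le {L B C D : ℝ} (hL : 0 ≤ L) (hB : 0 ≤ B) (hD : 0 ≤ D)
    (hBLD : B + L * D ≤ C) (hC1 : C < 1) :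
    L * √(D / (4 * (1 - C ^ 2))) / (1 - B) ≤ √L * √C / (2 * (1 - C)) := by
  have hC0 : 0 ≤ C := by nlinarith [mul_nonneg hL hD]
  have h1C : 0 < 1 - C := by linarith
  have h1B : 0 < 1 - B := by nlinarith [mul_nonneg hL hD]
  have h1C2 : 0 < 1 - C ^ 2 := by nlinarith
  rw [← pow_le_pow_iff_left₀ (by positivity) (by positivity) two_ne_zero, div_pow, div_pow,
    mul_pow, mul_pow, mul_pow, Real.sq_sqrt (by positivity), Real.sq_sqrt hL, Real.sq_sqrt hC0,
    div_le_div_iff₀ (by positivity) (by positivity)]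
  have hkey : (C - B) * (1 - C) ≤ C * (1 - B) * ((1 + C) * (1 - B)) :=
    mul_le_mul (by nlinarith) (by nlinarith) h1C.le (by positivity)
  calc L ^ 2 * (D / (4 * (1 - C ^ 2))) * (2 ^ 2 * (1 - C) ^ 2)
        = L * (L * D * (1 - C)) / (1 + C) := by field_simp; ring
    _ ≤ L * ((C - B) * (1 - C)) / (1 + C) := by gcongr; linarith
    _ ≤ L * (C * (1 - B) * ((1 + C) * (1 - B))) / (1 + C) := by gcongr
    _ = L * C * (1 - B) ^ 2 := by field_simp

theorem abs_inv_mul_sum_le {n : ℕ} {g : Fin n → ℝ} {K : ℝ} (hK : 0 ≤ K) (hg : ∀ i, |g i| ≤ K) :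
    |(1 / (n : ℝ)) * ∑ i, g i| ≤ K := by
  rcases n.eq_zero_or_pos with rfl | hn
  · simpa using hK
  have hn' : (0 : ℝ) < n := by exact_mod_cast hn
  rw [abs_mul, abs_of_pos (by positivity), one_div, inv_mul_le_iff₀ hn']
  calc |∑ i, g i| ≤ ∑ i, |g i| := abs_sum_le_sum_abs _ _
    _ ≤ ∑ _i : Fin n, K := sum_le_sum fun i _ => hg i
    _ = n * K := by simp

section MeanField

variable {n : ℕ} {Nbr : Fin n → Finset (Fin n)} {f : Fin n → Bool → Bool → ℝ → ℝ}
  {π : Fin n → ℝ} {μ : State n → ℝ} {P : Fin n → ℝ} {L B C : ℝ} {D : ℕ}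

theorem IsStationary.expect_eq (hμ : IsStationary Nbr f π μ) (F : State n → ℝ) :
    expect μ F = expect μ fun y => expect (prodLaw (succProb Nbr f π y)) F := by
  conv_lhs => rw [← hμ.2]
  simp only [expect, step, sum_mul, mul_sum, mul_assoc]
  exact sum_comm

def avgResp (f : Fin n → Bool → Bool → ℝ → ℝ) (π : Fin n → ℝ) (j : Fin n) (b : Bool) (z : ℝ) :
    ℝ :=
  π j * f j b true z + (1 - π j) * f j b false z

def ownEffect (f : Fin n → Bool → Bool → ℝ → ℝ) (π : Fin n → ℝ) (j : Fin n) (z : ℝ) : ℝ :=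
  avgResp f π j true z - avgResp f π j false z

def nbrFluct (Nbr : Fin n → Finset (Fin n)) (f : Fin n → Bool → Bool → ℝ → ℝ)
    (π P : Fin n → ℝ) (j : Fin n) (y : State n) : ℝ :=
  avgResp f π j (y j) (zc Nbr y j) - avgResp f π j (y j) (mfQ Nbr P j)

def nbrDev (Nbr : Fin n → Finset (Fin n)) (P c : Fin n → ℝ) (i : Fin n) (y : State n) : ℝ :=
  ∑ j ∈ Nbr i, c j * (Yi j y - P j)

theorem succProb_sub_eq (hP : mfStep Nbr f π P = P) (y : State n) (j : Fin n) :
    succProb Nbr f π y j - P j =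
      ownEffect f π j (mfQ Nbr P j) * (Yi j y - P j) + nbrFluct Nbr f π P j y := by
  have hfix := congrFun hP j
  simp only [mfStep, fext] at hfix
  rcases hy : y j <;>
    simp only [succProb, ownEffect, nbrFluct, avgResp, Yi, hy, ↓reduceIte, Bool.false_eq_true] <;>
    linear_combination hfix

theorem zc_sub_mfQ (y : State n) (i : Fin n) : zc Nbr y i - mfQ Nbr P i = nbrDev Nbr P 1 i y := by
  simp [zc, mfQ, nbrDev, Yi, sum_sub_distrib]

theorem abs_ownEffect_le {j : Fin n} {z : ℝ} (hπ : π j ∈ Set.Icc 0 1)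
    (hB : ∀ w, |f j true w z - f j false w z| ≤ B) : |ownEffect f π j z| ≤ B := by
  convert abs_convex_comb_le hπ (hB true) (hB false) using 2
  simp only [ownEffect, avgResp]
  ring

theorem abs_nbrFluct_le {j : Fin n} (hπ : π j ∈ Set.Icc 0 1) (hP : ∀ k, 0 ≤ P k)
    (hLip : ∀ b w z₁ z₂, 0 ≤ z₁ → 0 ≤ z₂ → |f j b w z₁ - f j b w z₂| ≤ L * |z₁ - z₂|)
    (y : State n) : |nbrFluct Nbr f π P j y| ≤ L * |nbrDev Nbr P 1 j y| := by
  have hz : 0 ≤ zc Nbr y j := sum_nonneg fun k _ => by split_ifs <;> norm_num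
  have hq : 0 ≤ mfQ Nbr P j := sum_nonneg fun k _ => hP k
  rw [← zc_sub_mfQ]
  convert abs_convex_comb_le hπ (hLip (y j) true _ _ hz hq) (hLip (y j) false _ _ hz hq) using 2
  simp only [nbrFluct, avgResp]
  ring

theorem abs_nbrDev_le {c : Fin n → ℝ} (hP : ∀ j, P j ∈ Set.Icc 0 1) (hc : ∀ j, |c j| ≤ 1)
    (i : Fin n) (y : State n) : |nbrDev Nbr P c i y| ≤ (Nbr i).card := by
  have hterm : ∀ j, |c j * (Yi j y - P j)| ≤ 1 := fun j => by
    have hYP : |Yi j y - P j| ≤ 1 := by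
      obtain ⟨h0, h1⟩ := hP j
      unfold Yi
      split_ifs <;> exact abs_le.mpr ⟨by linarith, by linarith⟩
    rw [abs_mul]
    exact mul_le_one₀ (hc j) (abs_nonneg _) hYP
  calc |nbrDev Nbr P c i y| ≤ ∑ j ∈ Nbr i, |c j * (Yi j y - P j)| := abs_sum_le_sum_abs _ _
    _ ≤ ∑ j ∈ Nbr i, (1 : ℝ) := sum_le_sum fun j _ => hterm j
    _ = (Nbr i).card := by simp

theorem l2Norm_nbrDev_le_mul (hμ : ∀ y, 0 ≤ μ y) {i : Fin n} {R K : ℝ}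
    (hR : ∀ c, (∀ j, |c j| ≤ 1) → l2Norm μ (nbrDev Nbr P c i) ≤ R) (hK : 0 ≤ K)
    {c : Fin n → ℝ} (hc : ∀ j, |c j| ≤ K) : l2Norm μ (nbrDev Nbr P c i) ≤ K * R := by
  obtain rfl | hK := hK.eq_or_lt
  · have hc0 : c = 0 := funext fun j => abs_nonpos_iff.mp (hc j)
    simp [hc0, nbrDev, l2Norm]
  have hscale : nbrDev Nbr P c i = fun y => K * nbrDev Nbr P (K⁻¹ • c) i y := by
    funext y
    simp only [nbrDev, mul_sum, Pi.smul_apply, smul_eq_mul]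
    exact sum_congr rfl fun j _ => by field_simp
  rw [hscale, l2Norm_const_mul hμ, abs_of_pos hK]
  refine mul_le_mul_of_nonneg_left (hR _ fun j => ?_) hK.le
  rw [Pi.smul_apply, smul_eq_mul, abs_mul, abs_inv, abs_of_pos hK]
  exact inv_mul_le_one_of_le₀ (hc j) hK.le

theorem l2Norm_nbrFluct_le (hμ : ∀ y, 0 ≤ μ y) (hπ : ∀ j, π j ∈ Set.Icc 0 1)
    (hP : ∀ k, 0 ≤ P k) (hReg : Regular Nbr f L B D C) (j : Fin n) :
    l2Norm μ (nbrFluct Nbr f π P j) ≤ L * l2Norm μ (nbrDev Nbr P 1 j) := by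
  obtain ⟨hL, hLip, -⟩ := hReg
  calc l2Norm μ (nbrFluct Nbr f π P j) ≤ l2Norm μ (fun y => L * nbrDev Nbr P 1 j y) :=
        l2Norm_mono hμ fun y => by
          rw [abs_mul, abs_of_nonneg hL]
          exact abs_nbrFluct_le (hπ j) hP (hLip j) y
    _ = L * l2Norm μ (nbrDev Nbr P 1 j) := by rw [l2Norm_const_mul hμ, abs_of_nonneg hL]

theorem l2Norm_drift_le (hμ : ∀ y, 0 ≤ μ y) (hπ : ∀ j, π j ∈ Set.Icc 0 1)
    (hP : IsMFFixed Nbr f π P) (hReg : Regular Nbr f L B D C) {R : ℝ} (hR0 : 0 ≤ R)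
    (hR : ∀ i c, (∀ j, |c j| ≤ 1) → l2Norm μ (nbrDev Nbr P c i) ≤ R)
    {c : Fin n → ℝ} (hc : ∀ j, |c j| ≤ 1) (i : Fin n) :
    l2Norm μ (fun y => ∑ j ∈ Nbr i, c j * (succProb Nbr f π y j - P j)) ≤ C * R := by
  have ⟨hL, _, hB, hD, hBLD, _⟩ := hReg
  have hP0 : ∀ k, 0 ≤ P k := fun k => (hP.1 k).1
  have hB0 : 0 ≤ B := (abs_nonneg _).trans (hB i true 0 le_rfl)
  set own := nbrDev Nbr P (fun j => c j * ownEffect f π j (mfQ Nbr P j)) i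
  set fluct : Fin n → State n → ℝ := fun j y => c j * nbrFluct Nbr f π P j y
  have hsplit : (fun y => ∑ j ∈ Nbr i, c j * (succProb Nbr f π y j - P j)) =
      own + ∑ j ∈ Nbr i, fluct j := by
    funext y
    simp only [own, fluct, nbrDev, Pi.add_apply, Finset.sum_apply, succProb_sub_eq hP.2,
      ← sum_add_distrib]
    exact sum_congr rfl fun j _ => by ring
  have hown : l2Norm μ own ≤ B * R := by
    refine l2Norm_nbrDev_le_mul hμ (hR i) hB0 fun j => ?_
    rw [abs_mul, ← one_mul B]
    exact mul_le_mul (hc j) (abs_ownEffect_le (hπ j) fun w => hB j w _ (sum_nonneg fun k _ => hP0 k))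
      (abs_nonneg _) zero_le_one
  have hfluct : ∀ j, l2Norm μ (fluct j) ≤ L * R := fun j => by
    rw [l2Norm_const_mul hμ]
    calc |c j| * l2Norm μ (nbrFluct Nbr f π P j) ≤ 1 * (L * l2Norm μ (nbrDev Nbr P 1 j)) :=
          mul_le_mul (hc j) (l2Norm_nbrFluct_le hμ hπ hP0 hReg j)
            (Real.sqrt_nonneg _) zero_le_one
      _ ≤ L * R := by
          rw [one_mul]
          exact mul_le_mul_of_nonneg_left (hR j 1 fun _ => by simp) hL
  have hcard : ((Nbr i).card : ℝ) ≤ D := by exact_mod_cast hD i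
  calc _ ≤ l2Norm μ own + ∑ j ∈ Nbr i, l2Norm μ (fluct j) := by
        rw [hsplit]
        exact (l2Norm_add_le hμ _ _).trans (add_le_add le_rfl (l2Norm_sum_le hμ _ _))
    _ ≤ B * R + (Nbr i).card * (L * R) := by
        refine add_le_add hown ?_
        simpa using sum_le_card_nsmul _ _ _ fun j _ => hfluct j
    _ ≤ (B + L * D) * R := by nlinarith [mul_le_mul_of_nonneg_right hcard (mul_nonneg hL hR0)]
    _ ≤ C * R := mul_le_mul_of_nonneg_right hBLD hR0

theorem sq_l2Norm_nbrDev_le (hμ : IsStationary Nbr f π μ) (hπ : ∀ j, π j ∈ Set.Icc 0 1)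
    (hP : IsMFFixed Nbr f π P) (hReg : Regular Nbr f L B D C) {R : ℝ} (hR0 : 0 ≤ R)
    (hR : ∀ i c, (∀ j, |c j| ≤ 1) → l2Norm μ (nbrDev Nbr P c i) ≤ R)
    {c : Fin n → ℝ} (hc : ∀ j, |c j| ≤ 1) (i : Fin n) :
    l2Norm μ (nbrDev Nbr P c i) ^ 2 ≤ D / 4 + (C * R) ^ 2 := by
  set s := succProb Nbr f π
  have hvar : ∀ y, ∑ j ∈ Nbr i, c j ^ 2 * (s y j * (1 - s y j)) ≤ (D : ℝ) / 4 := fun y => by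
    have hterm : ∀ j, c j ^ 2 * (s y j * (1 - s y j)) ≤ 1 / 4 := fun j => by
      have hc2 : c j ^ 2 ≤ 1 := (sq_le_one_iff_abs_le_one _).mpr (hc j)
      nlinarith [mul_nonneg (sq_nonneg (c j)) (sq_nonneg (s y j - 1 / 2))]
    have hcard : ((Nbr i).card : ℝ) ≤ D := by exact_mod_cast hReg.2.2.2.1 i
    calc _ ≤ (Nbr i).card * (1 / 4 : ℝ) := by
          simpa using sum_le_card_nsmul _ _ _ fun j _ => hterm j
      _ ≤ D / 4 := by linarith
  have hdrift := l2Norm_drift_le hμ.1.1 hπ hP hReg hR0 hR hc i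
  calc l2Norm μ (nbrDev Nbr P c i) ^ 2 = expect μ fun y => nbrDev Nbr P c i y ^ 2 :=
        sq_l2Norm hμ.1.1 _
    _ = expect μ fun y => ∑ j ∈ Nbr i, c j ^ 2 * (s y j * (1 - s y j)) +
          (∑ j ∈ Nbr i, c j * (s y j - P j)) ^ 2 := by
        rw [hμ.expect_eq]
        simp only [nbrDev, expect_prodLaw_sq_sum, s]
    _ = (expect μ fun y => ∑ j ∈ Nbr i, c j ^ 2 * (s y j * (1 - s y j))) +
          l2Norm μ (fun y => ∑ j ∈ Nbr i, c j * (s y j - P j)) ^ 2 := by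
        rw [expect_add, sq_l2Norm hμ.1.1]
        rfl
    _ ≤ D / 4 + (C * R) ^ 2 := by
        gcongr
        · exact expect_le_of_le hμ.1 hvar
        · exact Real.sqrt_nonneg _

theorem l2Norm_nbrDev_le (hμ : IsStationary Nbr f π μ) (hπ : ∀ j, π j ∈ Set.Icc 0 1)
    (hP : IsMFFixed Nbr f π P) (hReg : Regular Nbr f L B D C)
    {c : Fin n → ℝ} (hc : ∀ j, |c j| ≤ 1) (i : Fin n) :
    l2Norm μ (nbrDev Nbr P c i) ≤ √(D / (4 * (1 - C ^ 2))) := by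
  have ⟨hL, _, hB, hD, hBLD, hC1⟩ := hReg
  have hC0 : 0 ≤ C := by
    nlinarith [(abs_nonneg _).trans (hB i true 0 le_rfl), mul_nonneg hL (Nat.cast_nonneg D)]
  let M := ⨆ p : Fin n × {c : Fin n → ℝ // ∀ j, |c j| ≤ 1}, l2Norm μ (nbrDev Nbr P p.2.1 p.1)
  have hbdd : BddAbove (Set.range fun p : Fin n × {c : Fin n → ℝ // ∀ j, |c j| ≤ 1} =>
      l2Norm μ (nbrDev Nbr P p.2.1 p.1)) :=
    ⟨D, Set.forall_mem_range.2 fun p => l2Norm_le_of_abs_le hμ.1.1 hμ.1.2 fun y =>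
      (abs_nbrDev_le hP.1 p.2.2 p.1 y).trans (by exact_mod_cast hD p.1)⟩
  have hle : ∀ i c, (∀ j, |c j| ≤ 1) → l2Norm μ (nbrDev Nbr P c i) ≤ M :=
    fun i c hc => le_ciSup hbdd (i, ⟨c, hc⟩)
  have hM0 : 0 ≤ M := Real.iSup_nonneg fun _ => Real.sqrt_nonneg _
  have hM : M ^ 2 ≤ D / 4 + (C * M) ^ 2 := by
    refine (Real.le_sqrt hM0 (by positivity)).mp (Real.iSup_le (fun p => ?_) (Real.sqrt_nonneg _))
    exact Real.le_sqrt_of_sq_le (sq_l2Norm_nbrDev_le hμ hπ hP hReg hM0 hle p.2.2 p.1)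
  refine (hle i c hc).trans (Real.le_sqrt_of_sq_le ?_)
  rw [le_div_iff₀ (by nlinarith)]
  nlinarith

theorem abs_expect_Yi_sub_le (hμ : IsStationary Nbr f π μ) (hπ : ∀ j, π j ∈ Set.Icc 0 1)
    (hP : IsMFFixed Nbr f π P) (hReg : Regular Nbr f L B D C) (i : Fin n) :
    |expect μ (Yi i) - P i| ≤ L * √(D / (4 * (1 - C ^ 2))) / (1 - B) := by
  have ⟨hL, _, hB, _, hBLD, hC1⟩ := hReg
  set e := expect μ (Yi i) - P i
  set a := ownEffect f π i (mfQ Nbr P i)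
  have hmean : e = a * e + expect μ (nbrFluct Nbr f π P i) := by
    have hYi : expect μ (Yi i) = expect μ fun y => succProb Nbr f π y i := by
      simp only [hμ.expect_eq (Yi i), expect_prodLaw_Yi]
    calc e = expect μ fun y => succProb Nbr f π y i - P i := by rw [expect_sub_const hμ.1, ← hYi]
      _ = expect μ fun y => a * (Yi i y - P i) + nbrFluct Nbr f π P i y := by
        simp only [succProb_sub_eq hP.2, a]
      _ = a * e + expect μ (nbrFluct Nbr f π P i) := by
        rw [expect_add, expect_const_mul, expect_sub_const hμ.1]
  have ha : |a| ≤ B := abs_ownEffect_le (hπ i) fun w => hB i w _ (sum_nonneg fun k _ => (hP.1 k).1)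
  have hfluct : |expect μ (nbrFluct Nbr f π P i)| ≤ L * √(D / (4 * (1 - C ^ 2))) :=
    (abs_sum_mul_le_l2Norm hμ.1.1 hμ.1.2 _).trans <|
      (l2Norm_nbrFluct_le hμ.1.1 hπ (fun k => (hP.1 k).1) hReg i).trans <|
        mul_le_mul_of_nonneg_left (l2Norm_nbrDev_le hμ hπ hP hReg (fun _ => by simp) i) hL
  have hB1 : B < 1 := by nlinarith [mul_nonneg hL (Nat.cast_nonneg D)]
  rw [le_div_iff₀ (by linarith)]
  have : |e| ≤ B * |e| + L * √(D / (4 * (1 - C ^ 2))) := by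
    calc |e| = |a * e + expect μ (nbrFluct Nbr f π P i)| := by rw [← hmean]
      _ ≤ |a| * |e| + |expect μ (nbrFluct Nbr f π P i)| := by
        rw [← abs_mul]; exact abs_add_le _ _
      _ ≤ B * |e| + L * √(D / (4 * (1 - C ^ 2))) := by gcongr
  linarith

theorem abs_expect_Yi_sub_le_sqrt (hμ : IsStationary Nbr f π μ) (hπ : ∀ j, π j ∈ Set.Icc 0 1)
    (hP : IsMFFixed Nbr f π P) (hReg : Regular Nbr f L B D C) (i : Fin n) :
    |expect μ (Yi i) - P i| ≤ √L * √C / (2 * (1 - C)) := by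
  have ⟨hL, _, hB, _, hBLD, hC1⟩ := hReg
  exact (abs_expect_Yi_sub_le hμ hπ hP hReg i).trans <|
    mul_sqrt_div_le hL ((abs_nonneg _).trans (hB i true 0 le_rfl)) D.cast_nonneg hBLD hC1

end MeanField

end MRT

end

open MRT in
theorem lte_mean_field_approx_general
    (n : ℕ) (Nbr : Fin n → Finset (Fin n)) (f : Fin n → Bool → Bool → ℝ → ℝ)
    (π : Fin n → ℝ) (L B C : ℝ) (D : ℕ)
    (hπ : ∀ i, π i ∈ Set.Ioo (0 : ℝ) 1)
    (hReg : Regular Nbr f L B D C)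
    (Δ : ℝ) (v : Fin n → ℝ)
    (hπΔ : ∀ i, π i + Δ * v i ∈ Set.Ioo (0 : ℝ) 1)
    (μ μ' : State n → ℝ)
    (hμ : IsStationary Nbr f π μ)
    (hμ' : IsStationary Nbr f (fun i => π i + Δ * v i) μ')
    (P P' : Fin n → ℝ)
    (hP : IsMFFixed Nbr f π P)
    (hP' : IsMFFixed Nbr f (fun i => π i + Δ * v i) P') :
    |(1 / (n : ℝ)) * ∑ i : Fin n, (expect μ' (Yi i) - expect μ (Yi i)) -
        (1 / (n : ℝ)) * ∑ i : Fin n, (P' i - P i)| ≤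
      Real.sqrt L * Real.sqrt C / (1 - C) := by
  have hK : 0 ≤ √L * √C / (2 * (1 - C)) := div_nonneg (by positivity) (by linarith [hReg.2.2.2.2.2])
  have h := abs_expect_Yi_sub_le_sqrt hμ (fun j => Set.Ioo_subset_Icc_self (hπ j)) hP hReg
  have h' := abs_expect_Yi_sub_le_sqrt hμ' (fun j => Set.Ioo_subset_Icc_self (hπΔ j)) hP' hReg
  calc _ = |(1 / (n : ℝ)) * ∑ i, ((expect μ' (Yi i) - P' i) - (expect μ (Yi i) - P i))| := by
        rw [← mul_sub, ← sum_sub_distrib]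
        exact congrArg (fun x => |_ * x|) (sum_congr rfl fun i _ => by ring)
    _ ≤ 2 * (√L * √C / (2 * (1 - C))) :=
        abs_inv_mul_sum_le (mul_nonneg zero_le_two hK) fun i => (abs_sub _ _).trans (by linarith [h i, h' i])
    _ = √L * √C / (1 - C) := by field_simp

open MRT in
/-- the long-term total effect is close to its mean-field analogue:
`|τ_LTE(π+Δv, π) − τ̃_LTE(π+Δv, π)| ≤ √L √C/(1−C)`. -/
theorem lte_mean_field_approx
    (n : ℕ) (Nbr : Fin n → Finset (Fin n)) (f : Fin n → Bool → Bool → ℝ → ℝ)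
    (π : Fin n → ℝ) (L B C : ℝ) (D : ℕ)
    (hG : GoodGraph Nbr)
    (hf : PosF f)
    (hπ : ∀ i, π i ∈ Set.Ioo (0 : ℝ) 1)
    (hReg : Regular Nbr f L B D C)
    (Δ : ℝ) (v : Fin n → ℝ)
    (hπΔ : ∀ i, π i + Δ * v i ∈ Set.Ioo (0 : ℝ) 1)
    (μ μ' : State n → ℝ)
    (hμ : IsStationary Nbr f π μ)
    (hμ' : IsStationary Nbr f (fun i => π i + Δ * v i) μ')
    (P P' : Fin n → ℝ)
    (hP : IsMFFixed Nbr f π P)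
    (hP' : IsMFFixed Nbr f (fun i => π i + Δ * v i) P') :
    |(1 / (n : ℝ)) * ∑ i : Fin n, (expect μ' (Yi i) - expect μ (Yi i)) -
        (1 / (n : ℝ)) * ∑ i : Fin n, (P' i - P i)| ≤
      Real.sqrt L * Real.sqrt C / (1 - C) :=
  lte_mean_field_approx_general n Nbr f π L B C D hπ hReg Δ v hπΔ μ μ' hμ hμ' P P' hP hP'
end

section
/- Under the regularity assumptions, the transition kernel P(π) of the MDP with Bernoulli treatments is a contraction for the L1-Wasserstein distance: for any two probability distributions ν₁, ν₂ on {0,1}^n, W_{L1}(ν₁ P(π), ν₂ P(π)) ≤ C·W_{L1}(ν₁, ν₂). -/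
open Finset Filter Topology

/-!
Given a coupling `γ` of `ν₁` and `ν₂`, move every pair `(x, y)` one step by coupling the
product Bernoulli laws `P(π)(x, ·)` and `P(π)(y, ·)` coordinatewise maximally. Coordinate `i`
then disagrees with probability `|p_i(x) - p_i(y)| ≤ B·|x_i - y_i| + L·∑_{j ∈ 𝒩_i} |x_j - y_j|`,
and summing over `i`, each disagreement `x_j ≠ y_j` is counted once with weight `B` and at most
`D` times (once per neighbour of `j`) with weight `L`. So the new coupling costs at most
`(B + L·D) ≤ C` times the cost of `γ`, and it remains to take the infimum over `γ`.
-/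

lemma Fintype.sum_sum_prod_eq_prod_sum_sum {ι β : Type*} [Fintype ι] [DecidableEq ι] [Fintype β]
    (F : ι → β → β → ℝ) :
    ∑ x : ι → β, ∑ y : ι → β, ∏ i, F i (x i) (y i) = ∏ i, ∑ a, ∑ b, F i a b := by
  rw [prod_sum]
  exact Finset.sum_congr rfl fun x _ => (prod_sum fun i b => F i (x i) b).symm

namespace MRT

variable {n : ℕ}

/-- The maximal coupling of `Bernoulli p` and `Bernoulli q`: it puts mass `min p q` on `(1,1)`
and `1 - max p q` on `(0,0)`, so the two coordinates differ with probability `|p - q|`. -/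
def bernoulliCoupling (p q : ℝ) (a b : Bool) : ℝ :=
  if a then (if b then min p q else p - min p q)
  else (if b then q - min p q else 1 - max p q)

lemma bernoulliCoupling_nonneg {p q : ℝ} (hp : p ∈ Set.Icc (0 : ℝ) 1)
    (hq : q ∈ Set.Icc (0 : ℝ) 1) (a b : Bool) : 0 ≤ bernoulliCoupling p q a b := by
  obtain ⟨hp0, hp1⟩ := hp
  obtain ⟨hq0, hq1⟩ := hq
  cases a <;> cases b <;> simp [bernoulliCoupling, *]

lemma sum_bernoulliCoupling_right (p q : ℝ) (a : Bool) :
    ∑ b, bernoulliCoupling p q a b = if a then p else 1 - p := by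
  have := min_add_max p q
  cases a <;> simp [bernoulliCoupling]
  linarith

lemma sum_bernoulliCoupling_left (p q : ℝ) (b : Bool) :
    ∑ a, bernoulliCoupling p q a b = if b then q else 1 - q := by
  have := min_add_max p q
  cases b <;> simp [bernoulliCoupling]
  linarith

lemma sum_sum_bernoulliCoupling (p q : ℝ) : ∑ a, ∑ b, bernoulliCoupling p q a b = 1 := by
  have := min_add_max p q
  simp [bernoulliCoupling]
  linarith

lemma sum_sum_bernoulliCoupling_mul_ne (p q : ℝ) :
    ∑ a, ∑ b, bernoulliCoupling p q a b * (if a = b then 0 else 1) = |p - q| := by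
  have := min_add_max p q
  have := max_sub_min_eq_abs' p q
  simp [bernoulliCoupling]
  linarith

def prodCoupling (p q : Fin n → ℝ) (z : State n × State n) : ℝ :=
  ∏ i, bernoulliCoupling (p i) (q i) (z.1 i) (z.2 i)

lemma isCoupling_prodCoupling {p q : Fin n → ℝ} (hp : ∀ i, p i ∈ Set.Icc (0 : ℝ) 1)
    (hq : ∀ i, q i ∈ Set.Icc (0 : ℝ) 1) :
    IsCoupling (prodCoupling p q) (prodLaw p) (prodLaw q) := by
  refine ⟨fun z => prod_nonneg fun i _ => bernoulliCoupling_nonneg (hp i) (hq i) _ _,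
    fun x => ?_, fun y => ?_⟩
  · rw [prodLaw, ← prod_congr rfl fun i _ => sum_bernoulliCoupling_right (p i) (q i) (x i),
      Fintype.prod_sum]
    rfl
  · rw [prodLaw, ← prod_congr rfl fun i _ => sum_bernoulliCoupling_left (p i) (q i) (y i),
      Fintype.prod_sum]
    rfl

lemma sum_prodCoupling_mul_hamming (p q : Fin n → ℝ) :
    ∑ z, prodCoupling p q z * hamming z.1 z.2 = ∑ j, |p j - q j| := by
  have factor : ∀ (x y : State n) j, prodCoupling p q (x, y) * (if x j = y j then 0 else 1) =
      ∏ i, bernoulliCoupling (p i) (q i) (x i) (y i) *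
        (if i = j then (if x i = y i then 0 else 1) else 1) := by
    intro x y j
    rw [prod_mul_distrib, prod_ite_eq' univ j, if_pos (mem_univ j), prodCoupling]
  have marginal : ∀ i j : Fin n, ∑ a, ∑ b, bernoulliCoupling (p i) (q i) a b *
      (if i = j then (if a = b then 0 else 1) else 1) = if i = j then |p i - q i| else 1 := by
    intro i j
    split_ifs
    · exact sum_sum_bernoulliCoupling_mul_ne _ _
    · simpa only [mul_one] using sum_sum_bernoulliCoupling _ _
  simp only [hamming, mul_sum, Fintype.sum_prod_type, factor]
  rw [sum_congr rfl fun x _ => sum_comm, sum_comm]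
  refine sum_congr rfl fun j _ => ?_
  rw [Fintype.sum_sum_prod_eq_prod_sum_sum fun i a b => bernoulliCoupling (p i) (q i) a b *
      (if i = j then (if a = b then 0 else 1) else 1),
    prod_congr rfl fun i _ => marginal i j, prod_ite_eq' univ j, if_pos (mem_univ j)]

lemma hamming_nonneg (x y : State n) : 0 ≤ hamming x y :=
  sum_nonneg fun _ _ => by split_ifs <;> norm_num

lemma IsCoupling.cost_nonneg {γ : State n × State n → ℝ} {ν₁ ν₂ : State n → ℝ}
    (hγ : IsCoupling γ ν₁ ν₂) : 0 ≤ ∑ p, γ p * hamming p.1 p.2 :=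
  sum_nonneg fun p _ => mul_nonneg (hγ.1 p) (hamming_nonneg p.1 p.2)

lemma IsDist.isCoupling_mul {ν₁ ν₂ : State n → ℝ} (h₁ : IsDist ν₁) (h₂ : IsDist ν₂) :
    IsCoupling (fun p => ν₁ p.1 * ν₂ p.2) ν₁ ν₂ :=
  ⟨fun p => mul_nonneg (h₁.1 _) (h₂.1 _), fun x => by dsimp only; rw [← mul_sum, h₂.2, mul_one],
    fun y => by dsimp only; rw [← sum_mul, h₁.2, one_mul]⟩

lemma IsCoupling.bind {γ : State n × State n → ℝ} {ν₁ ν₂ : State n → ℝ}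
    (hγ : IsCoupling γ ν₁ ν₂) {κ : State n → State n → ℝ}
    {K : State n × State n → State n × State n → ℝ} (hK : ∀ r, IsCoupling (K r) (κ r.1) (κ r.2)) :
    IsCoupling (fun z => ∑ r, γ r * K r z)
      (fun x' => ∑ x, ν₁ x * κ x x') (fun y' => ∑ y, ν₂ y * κ y y') := by
  obtain ⟨hγ0, hγ₁, hγ₂⟩ := hγ
  refine ⟨fun z => sum_nonneg fun r _ => mul_nonneg (hγ0 r) ((hK r).1 z),
    fun x' => ?_, fun y' => ?_⟩
  · calc ∑ y', ∑ r, γ r * K r (x', y')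
        = ∑ x, ∑ y, γ (x, y) * κ x x' := by
          rw [sum_comm, Fintype.sum_prod_type]
          simp only [← mul_sum, (hK _).2.1]
      _ = ∑ x, ν₁ x * κ x x' := by simp only [← sum_mul, hγ₁]
  · calc ∑ x', ∑ r, γ r * K r (x', y')
        = ∑ y, ∑ x, γ (x, y) * κ y y' := by
          rw [sum_comm, Fintype.sum_prod_type_right]
          simp only [← mul_sum, (hK _).2.2]
      _ = ∑ y, ν₂ y * κ y y' := by simp only [← sum_mul, hγ₂]

lemma sum_bind_mul (γ : State n × State n → ℝ) (K : State n × State n → State n × State n → ℝ)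
    (c : State n × State n → ℝ) :
    ∑ z, (∑ r, γ r * K r z) * c z = ∑ r, γ r * ∑ z, K r z * c z := by
  simp only [sum_mul, mul_sum, mul_assoc]
  exact sum_comm

section Regularity

variable {Nbr : Fin n → Finset (Fin n)} {f : Fin n → Bool → Bool → ℝ → ℝ} {π : Fin n → ℝ}

lemma zc_nonneg (Nbr : Fin n → Finset (Fin n)) (y : State n) (i : Fin n) : 0 ≤ zc Nbr y i :=
  sum_nonneg fun _ _ => by split_ifs <;> norm_num

lemma succProb_mem_Icc (hf : PosF f) (hπ : ∀ i, π i ∈ Set.Icc (0 : ℝ) 1) (y : State n)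
    (i : Fin n) : succProb Nbr f π y i ∈ Set.Icc (0 : ℝ) 1 := by
  obtain ⟨hπ0, hπ1⟩ := hπ i
  obtain ⟨ht0, ht1⟩ := hf i (y i) true _ (zc_nonneg Nbr y i)
  obtain ⟨hf0, hf1⟩ := hf i (y i) false _ (zc_nonneg Nbr y i)
  constructor <;> unfold succProb <;> nlinarith

lemma abs_zc_sub_le_nbrDiff (Nbr : Fin n → Finset (Fin n)) (x y : State n) (i : Fin n) :
    |zc Nbr x i - zc Nbr y i| ≤ nbrDiff Nbr i x y := by
  rw [zc, zc, ← sum_sub_distrib]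
  refine (abs_sum_le_sum_abs _ _).trans (sum_le_sum fun j _ => ?_)
  cases x j <;> cases y j <;> norm_num

lemma sum_nbrDiff_le_mul_hamming {D : ℕ} (hsymm : ∀ i j, i ∈ Nbr j ↔ j ∈ Nbr i)
    (hD : ∀ i, (Nbr i).card ≤ D) (x y : State n) :
    ∑ i, nbrDiff Nbr i x y ≤ D * hamming x y := by
  calc ∑ i, nbrDiff Nbr i x y
      = ∑ j, ∑ _i ∈ Nbr j, (if x j = y j then (0 : ℝ) else 1) :=
        sum_comm' fun i j => by simp [hsymm i j]
    _ ≤ ∑ j, (D : ℝ) * (if x j = y j then 0 else 1) := by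
        refine sum_le_sum fun j _ => ?_
        rw [sum_const, nsmul_eq_mul]
        exact mul_le_mul_of_nonneg_right (by exact_mod_cast hD j) (by split_ifs <;> norm_num)
    _ = D * hamming x y := by rw [hamming, mul_sum]

variable {L B C : ℝ} {D : ℕ}

lemma abs_f_sub_le (hReg : Regular Nbr f L B D C) (x y : State n) (i : Fin n) (w : Bool) :
    |f i (x i) w (zc Nbr x i) - f i (y i) w (zc Nbr y i)| ≤
      B * (if x i = y i then 0 else 1) + L * nbrDiff Nbr i x y := by
  obtain ⟨hL, hLip, hB, -⟩ := hReg
  have hzx := zc_nonneg Nbr x i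
  have own : |f i (x i) w (zc Nbr x i) - f i (y i) w (zc Nbr x i)| ≤
      B * (if x i = y i then 0 else 1) := by
    by_cases h : x i = y i
    · simp [h]
    · rw [if_neg h, mul_one]
      cases hx : x i <;> cases hy : y i <;> simp only [hx, hy, not_true_eq_false] at h
      · rw [abs_sub_comm]; exact hB i w _ hzx
      · exact hB i w _ hzx
  have nbrs : |f i (y i) w (zc Nbr x i) - f i (y i) w (zc Nbr y i)| ≤ L * nbrDiff Nbr i x y :=
    (hLip i (y i) w _ _ hzx (zc_nonneg Nbr y i)).trans
      (mul_le_mul_of_nonneg_left (abs_zc_sub_le_nbrDiff Nbr x y i) hL)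
  exact (abs_sub_le _ _ _).trans (add_le_add own nbrs)

lemma abs_succProb_sub_le (hReg : Regular Nbr f L B D C) (hπ : ∀ i, π i ∈ Set.Icc (0 : ℝ) 1)
    (x y : State n) (i : Fin n) :
    |succProb Nbr f π x i - succProb Nbr f π y i| ≤
      B * (if x i = y i then 0 else 1) + L * nbrDiff Nbr i x y := by
  obtain ⟨hπ0, hπ1⟩ := hπ i
  have ht := abs_le.mp (abs_f_sub_le hReg x y i true)
  have hf := abs_le.mp (abs_f_sub_le hReg x y i false)
  rw [abs_le]
  constructor <;> unfold succProb <;> nlinarith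

lemma sum_abs_succProb_sub_le (hsymm : ∀ i j, i ∈ Nbr j ↔ j ∈ Nbr i)
    (hReg : Regular Nbr f L B D C) (hπ : ∀ i, π i ∈ Set.Icc (0 : ℝ) 1) (x y : State n) :
    ∑ i, |succProb Nbr f π x i - succProb Nbr f π y i| ≤ C * hamming x y := by
  obtain ⟨hL, -, -, hD, hC, -⟩ := id hReg
  have hnbr := sum_nbrDiff_le_mul_hamming hsymm hD x y
  calc ∑ i, |succProb Nbr f π x i - succProb Nbr f π y i|
      ≤ ∑ i, (B * (if x i = y i then 0 else 1) + L * nbrDiff Nbr i x y) :=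
        sum_le_sum fun i _ => abs_succProb_sub_le hReg hπ x y i
    _ = B * hamming x y + L * ∑ i, nbrDiff Nbr i x y := by
        rw [sum_add_distrib, ← mul_sum, ← mul_sum, hamming]
    _ ≤ (B + L * D) * hamming x y := by nlinarith
    _ ≤ C * hamming x y := mul_le_mul_of_nonneg_right hC (hamming_nonneg x y)

end Regularity

lemma exists_isCoupling_step_cost_le {Nbr : Fin n → Finset (Fin n)}
    {f : Fin n → Bool → Bool → ℝ → ℝ} {π : Fin n → ℝ} {L B C : ℝ} {D : ℕ}
    (hsymm : ∀ i j, i ∈ Nbr j ↔ j ∈ Nbr i) (hf : PosF f) (hπ : ∀ i, π i ∈ Set.Icc (0 : ℝ) 1)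
    (hReg : Regular Nbr f L B D C) {ν₁ ν₂ : State n → ℝ} {γ : State n × State n → ℝ}
    (hγ : IsCoupling γ ν₁ ν₂) :
    ∃ Γ, IsCoupling Γ (step Nbr f π ν₁) (step Nbr f π ν₂) ∧
      ∑ p, Γ p * hamming p.1 p.2 ≤ C * ∑ p, γ p * hamming p.1 p.2 := by
  let sp := succProb Nbr f π
  refine ⟨_, hγ.bind (κ := kernel Nbr f π) (K := fun r => prodCoupling (sp r.1) (sp r.2))
    fun r => isCoupling_prodCoupling (succProb_mem_Icc hf hπ r.1) (succProb_mem_Icc hf hπ r.2), ?_⟩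
  rw [sum_bind_mul, mul_sum]
  refine sum_le_sum fun r _ => ?_
  rw [sum_prodCoupling_mul_hamming, mul_left_comm]
  exact mul_le_mul_of_nonneg_left (sum_abs_succProb_sub_le hsymm hReg hπ r.1 r.2) (hγ.1 r)

end MRT

lemma csInf_le_mul_csInf_of_forall_exists_le {S T : Set ℝ} {C : ℝ} (hS : S.Nonempty)
    (hS0 : ∀ c ∈ S, 0 ≤ c) (hT0 : ∀ c ∈ T, 0 ≤ c) (h : ∀ c ∈ S, ∃ c' ∈ T, c' ≤ C * c) :
    sInf T ≤ C * sInf S := by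
  have hT : BddBelow T := ⟨0, hT0⟩
  rcases lt_or_ge C 0 with hC | hC
  · -- `0 ≤ c' ≤ C * c ≤ 0` forces every cost in `S` to vanish.
    obtain ⟨c, hc⟩ := hS
    obtain ⟨c', hc', hle⟩ := h c hc
    have hc0 : c = 0 := by nlinarith [hS0 c hc, hT0 c' hc']
    have hSinf : sInf S = 0 :=
      le_antisymm (hc0 ▸ csInf_le ⟨0, hS0⟩ hc) (Real.sInf_nonneg hS0)
    rw [hSinf, mul_zero]
    exact (csInf_le hT hc').trans (by simpa [hc0] using hle)
  · rw [← smul_eq_mul, ← Real.sInf_smul_of_nonneg hC]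
    refine le_csInf hS.smul_set ?_
    rintro _ ⟨c, hc, rfl⟩
    obtain ⟨c', hc', hle⟩ := h c hc
    exact (csInf_le hT hc').trans hle

open MRT in
/-- under the regularity assumptions, the transition kernel is a contraction
for the `L1`-Wasserstein distance. -/
theorem WL1_contraction
    (n : ℕ) (Nbr : Fin n → Finset (Fin n)) (f : Fin n → Bool → Bool → ℝ → ℝ)
    (π : Fin n → ℝ) (L B C : ℝ) (D : ℕ)
    (hG : GoodGraph Nbr)
    (hf : PosF f)
    (hπ : ∀ i, π i ∈ Set.Ioo (0 : ℝ) 1)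
    (hReg : Regular Nbr f L B D C)
    (ν₁ ν₂ : State n → ℝ) (h₁ : IsDist ν₁) (h₂ : IsDist ν₂) :
    WL1 (step Nbr f π ν₁) (step Nbr f π ν₂) ≤ C * WL1 ν₁ ν₂ := by
  have hπ' : ∀ i, π i ∈ Set.Icc (0 : ℝ) 1 := fun i => Set.Ioo_subset_Icc_self (hπ i)
  refine csInf_le_mul_csInf_of_forall_exists_le ⟨_, _, h₁.isCoupling_mul h₂, rfl⟩ ?_ ?_ ?_
  · rintro _ ⟨γ, hγ, rfl⟩
    exact hγ.cost_nonneg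
  · rintro _ ⟨Γ, hΓ, rfl⟩
    exact hΓ.cost_nonneg
  · rintro _ ⟨γ, hγ, rfl⟩
    obtain ⟨Γ, hΓ, hle⟩ := exists_isCoupling_step_cost_le hG.1 hf hπ' hReg hγ
    exact ⟨_, ⟨Γ, hΓ, rfl⟩, hle⟩
end
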